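/- arXiv:1308.1566 — 2 statements merged into one kernel-verified Lean document; each statement's English description precedes it below -/
import Mathlib

section
/- Set f̃(x, t) := (x⁵ − 95x⁴ − 110x³ − 150x² − 75x − 3)³·(x⁵ + 4x⁴ − 38x³ + 56x² + 53x − 4)³·(x − 3) − t·(x² − 6x − 1)⁸·(x² − x − 1)⁴·(x + 2)⁴·x. Then f̃, viewed as a polynomial of degree 31 in x, is irreducible over the rational function field ℚ(t). -/
/-!
As a polynomial in `t`, `f̃ = A(x) - t·B(x)` is linear with coprime coefficients `A`, `B`, hence
irreducible in `ℚ[x][t] = ℚ[t][x]`. As a polynomial in `x` it is monic over `ℚ[t]`, because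
`deg B = 29 < 31 = deg A` and `A` is monic, so Gauss's lemma carries irreducibility over to
`ℚ(t)[x]`. Coprimality of `A` and `B` is checked factor by factor: linear factors by evaluation,
the quintic factors of `A` against the quadratic factors of `B` by Bézout identities.
-/

open Polynomial

namespace PSL52Family

/-- The polynomial `f̃(x, t)` over `ℚ(t)`. -/
noncomputable def fTilde : Polynomial (RatFunc ℚ) :=
  (X^5 - 95*X^4 - 110*X^3 - 150*X^2 - 75*X - 3)^3 *
    (X^5 + 4*X^4 - 38*X^3 + 56*X^2 + 53*X - 4)^3 * (X - 3)
  - C RatFunc.X * (X^2 - 6*X - 1)^8 * (X^2 - X - 1)^4 * (X + 2)^4 * X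

end PSL52Family

namespace Polynomial

section
variable {K : Type*} [Field K]

theorem isCoprime_of_mul_add_mul_eq_C {a b u v : K[X]} {d : K} (hd : d ≠ 0)
    (h : u * a + v * b = C d) : IsCoprime a b :=
  ⟨C d⁻¹ * u, C d⁻¹ * v, by
    rw [mul_assoc, mul_assoc, ← mul_add, h, ← C_mul, inv_mul_cancel₀ hd, C_1]⟩

theorem isCoprime_X_sub_C_iff {c : K} {p : K[X]} : IsCoprime (X - C c) p ↔ ¬ p.IsRoot c := by
  rw [(irreducible_X_sub_C c).coprime_iff_not_dvd, dvd_iff_isRoot]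

theorem isCoprime_X_right {p : K[X]} (hp : ¬ p.IsRoot 0) : IsCoprime p X := by
  simpa using (isCoprime_X_sub_C_iff.mpr hp).symm

theorem isCoprime_X_add_two_right {p : K[X]} (hp : ¬ p.IsRoot (-2)) : IsCoprime p (X + 2) := by
  rw [← sub_neg_eq_add, ← C_ofNat, ← C_neg]
  exact (isCoprime_X_sub_C_iff.mpr hp).symm

end

section
variable {R : Type*} [CommRing R] [IsDomain R] {a b : R[X]}

theorem irreducible_map_C_sub_C_X_mul_map_C (hab : IsCoprime a b) (hb : b ≠ 0) :
    Irreducible (a.map C - C X * b.map C : R[X][X]) := by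
  rw [← MulEquiv.irreducible_iff (Bivariate.swap (R := R)), map_sub, map_mul,
    Bivariate.swap_map_C, Bivariate.swap_map_C, Bivariate.swap_X]
  convert irreducible_C_mul_X_add_C (neg_ne_zero.mpr hb) hab.symm.neg_left.isRelPrime using 1
  rw [map_neg]
  ring

theorem Monic.map_C_sub_C_mul_map_C (ha : a.Monic) (hba : b.degree < a.degree) (c : R[X]) :
    (a.map C - C c * b.map C : R[X][X]).Monic := by
  refine (ha.map C).sub_of_left ?_
  calc (C c * b.map C).degree ≤ (C c).degree + (b.map C).degree := degree_mul_le _ _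
    _ ≤ 0 + b.degree := add_le_add degree_C_le degree_map_le
    _ < a.degree := by rwa [zero_add]
    _ = (a.map C).degree := (ha.degree_map C).symm

end

theorem irreducible_map_sub_C_RatFunc_X_mul_map {k : Type*} [Field k] {a b : k[X]}
    (hab : IsCoprime a b) (hb : b ≠ 0) (ha : a.Monic) (hba : b.degree < a.degree) :
    Irreducible (a.map RatFunc.C - C RatFunc.X * b.map RatFunc.C) := by
  have := ((ha.map_C_sub_C_mul_map_C hba X).irreducible_iff_irreducible_map_fraction_map
    (K := RatFunc k)).mp (irreducible_map_C_sub_C_X_mul_map_C hab hb)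
  simpa only [Polynomial.map_sub, Polynomial.map_mul, map_map, map_C, RatFunc.algebraMap_comp_C,
    RatFunc.algebraMap_X, RatFunc.algebraMap_eq_C] using this

end Polynomial

namespace PSL52Family

noncomputable def p₁ : ℚ[X] := X^5 - 95*X^4 - 110*X^3 - 150*X^2 - 75*X - 3

noncomputable def p₂ : ℚ[X] := X^5 + 4*X^4 - 38*X^3 + 56*X^2 + 53*X - 4

noncomputable def q₁ : ℚ[X] := X^2 - 6*X - 1

noncomputable def q₂ : ℚ[X] := X^2 - X - 1

noncomputable def A : ℚ[X] := p₁^3 * p₂^3 * (X - 3)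

noncomputable def B : ℚ[X] := q₁^8 * q₂^4 * (X + 2)^4 * X

theorem fTilde_eq :
    fTilde = A.map RatFunc.C - C RatFunc.X * B.map RatFunc.C := by
  simp only [fTilde, A, B, p₁, p₂, q₁, q₂, Polynomial.map_sub, Polynomial.map_mul,
    Polynomial.map_pow, Polynomial.map_add, Polynomial.map_X, Polynomial.map_ofNat,
    Polynomial.map_one]
  ring

theorem monic_A : A.Monic := by
  unfold A p₁ p₂
  monicity!

theorem monic_B : B.Monic := by
  unfold B q₁ q₂
  monicity!

theorem degree_B_lt_degree_A : B.degree < A.degree := by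
  have hA : A.degree = 31 := by unfold A p₁ p₂; compute_degree!
  have hB : B.degree = 29 := by unfold B q₁ q₂; compute_degree!
  rw [hA, hB]
  decide

theorem isCoprime_B {f : ℚ[X]} (h₁ : IsCoprime f q₁) (h₂ : IsCoprime f q₂)
    (h₃ : ¬ f.IsRoot (-2)) (h₄ : ¬ f.IsRoot 0) : IsCoprime f B :=
  ((h₁.pow_right.mul_right h₂.pow_right).mul_right
    (isCoprime_X_add_two_right h₃).pow_right).mul_right (isCoprime_X_right h₄)

-- Bézout certificates from the extended Euclidean algorithm.
theorem isCoprime_p₁_q₁ : IsCoprime p₁ q₁ :=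
  isCoprime_of_mul_add_mul_eq_C (u := 1559 - 253*X)
    (v := -13677 - 34104*X - 23928*X^2 - 24076*X^3 + 253*X^4) (d := 9000) (by norm_num)
    (by simp only [p₁, q₁, map_ofNat]; ring)

theorem isCoprime_p₁_q₂ : IsCoprime p₁ q₂ :=
  isCoprime_of_mul_add_mul_eq_C (u := -47 + 29*X)
    (v := 16 + 3422*X + 1469*X^2 + 2773*X^3 - 29*X^4) (d := 125) (by norm_num)
    (by simp only [p₁, q₂, map_ofNat]; ring)

theorem isCoprime_p₂_q₁ : IsCoprime p₂ q₁ :=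
  isCoprime_of_mul_add_mul_eq_C (u := -80 + 13*X)
    (v := -580 - 812*X + 501*X^2 - 50*X^3 - 13*X^4) (d := 900) (by norm_num)
    (by simp only [p₂, q₁, map_ofNat]; ring)

theorem isCoprime_p₂_q₂ : IsCoprime p₂ q₂ :=
  isCoprime_of_mul_add_mul_eq_C (u := -3 + 2*X)
    (v := -13 - 154*X + 79*X^2 - 7*X^3 - 2*X^4) (d := 25) (by norm_num)
    (by simp only [p₂, q₂, map_ofNat]; ring)

theorem isCoprime_X_sub_three_B : IsCoprime (X - 3) B := by
  rw [← C_ofNat, isCoprime_X_sub_C_iff]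
  norm_num [B, q₁, q₂]

theorem isCoprime_A_B : IsCoprime A B := by
  refine ((isCoprime_B isCoprime_p₁_q₁ isCoprime_p₁_q₂ ?_ ?_).pow_left.mul_left
      (isCoprime_B isCoprime_p₂_q₁ isCoprime_p₂_q₂ ?_ ?_).pow_left).mul_left
      isCoprime_X_sub_three_B <;>
    norm_num [p₁, p₂]

/-- The polynomial `f̃(x, t)`, of degree 31 in `x`, is irreducible over
`ℚ(t)`. -/
theorem fTilde_irreducible :
    fTilde.natDegree = 31 ∧ Irreducible fTilde := by
  refine ⟨by unfold fTilde; compute_degree!, ?_⟩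
  rw [fTilde_eq]
  exact irreducible_map_sub_C_RatFunc_X_mul_map isCoprime_A_B monic_B.ne_zero monic_A
    degree_B_lt_degree_A

end PSL52Family
end

section
/- For every invertible matrix g ∈ GL₅(𝔽₂), the number of 1-dimensional subspaces of 𝔽₂⁵ fixed (setwise) by g equals the number of 4-dimensional subspaces (hyperplanes) of 𝔽₂⁵ fixed (setwise) by g. Consequently, the two transitive actions of PSL₅(𝔽₂) ≅ GL₅(𝔽₂) on 31 points — on the projective points and on the hyperplanes of PG(4, 2) — are arithmetically equivalent: every group element has the same number of fixed points in both actions. -/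
/-!
Over `𝔽₂` the only nonzero scalar is `1`, so a line `𝔽₂ ∙ v` is `g`-invariant exactly
when `g v = v`; hence `g` has `2 ^ dim ker (g - 1) - 1` invariant lines. Taking annihilators
identifies the `g`-invariant hyperplanes with the `gᵀ`-invariant lines of the dual space, and
`ker (gᵀ - 1) = ker ((g - 1)ᵀ)` has the same dimension as `ker (g - 1)` since a map and its
transpose have the same rank.
-/

open Module Submodule LinearMap

theorem LinearMap.dualMap_sub_one {R M : Type*} [CommRing R] [AddCommGroup M] [Module R M]
    (f : End R M) : (f - 1).dualMap = f.dualMap - 1 := by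
  ext φ v
  simp

section DualInvariant

variable {K V : Type*} [Field K] [AddCommGroup V] [Module K V]

theorem Subspace.map_eq_self_iff_map_le_of_injective [FiniteDimensional K V] {f : End K V}
    (hf : Function.Injective f) {W : Subspace K V} : W.map f = W ↔ W.map f ≤ W :=
  ⟨le_of_eq, fun h => eq_of_le_of_finrank_eq h
    ((LinearEquiv.ofInjectiveEndo f hf).finrank_map_eq W)⟩

theorem Subspace.dualAnnihilator_map_dualMap_le_iff (f : End K V) (W : Subspace K V) :
    W.dualAnnihilator.map f.dualMap ≤ W.dualAnnihilator ↔ W.map f ≤ W := by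
  constructor
  · rintro h _ ⟨v, hv, rfl⟩
    rw [← forall_mem_dualAnnihilator_apply_eq_zero_iff]
    intro φ hφ
    exact (mem_dualAnnihilator _).1 (h (mem_map_of_mem hφ)) v hv
  · rintro h _ ⟨φ, hφ, rfl⟩
    rw [mem_dualAnnihilator]
    intro w hw
    exact (mem_dualAnnihilator _).1 hφ _ (h (mem_map_of_mem hw))

theorem Subspace.dualAnnihilator_map_dualMap_eq_self_iff [FiniteDimensional K V] {f : End K V}
    (hf : Function.Injective f) (W : Subspace K V) :
    W.dualAnnihilator.map f.dualMap = W.dualAnnihilator ↔ W.map f = W := by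
  have hf' : Function.Injective f.dualMap :=
    dualMap_injective_of_surjective (injective_iff_surjective.mp hf)
  rw [map_eq_self_iff_map_le_of_injective hf, map_eq_self_iff_map_le_of_injective hf',
    dualAnnihilator_map_dualMap_le_iff]

theorem Subspace.ncard_invariant_codim_eq_ncard_invariant_dual [FiniteDimensional K V] {f : End K V}
    (hf : Function.Injective f) (k : ℕ) :
    {W : Subspace K V | finrank K W + k = finrank K V ∧ W.map f = W}.ncard =
      {Φ : Subspace K (Dual K V) | finrank K Φ = k ∧ Φ.map f.dualMap = Φ}.ncard := by
  refine Set.ncard_congr (fun W _ => W.dualAnnihilator) ?_ ?_ ?_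
  · rintro W ⟨hW, hfW⟩
    refine ⟨?_, (dualAnnihilator_map_dualMap_eq_self_iff hf W).mpr hfW⟩
    have := finrank_add_finrank_dualAnnihilator_eq W
    omega
  · intro W W' _ _ h
    exact dualAnnihilator_inj.mp h
  · rintro Φ ⟨hΦ, hfΦ⟩
    refine ⟨Φ.dualCoannihilator, ⟨?_, ?_⟩, dualCoannihilator_dualAnnihilator_eq⟩
    · have := finrank_add_finrank_dualAnnihilator_eq Φ.dualCoannihilator
      rw [dualCoannihilator_dualAnnihilator_eq] at this
      omega
    · rw [← dualAnnihilator_map_dualMap_eq_self_iff hf, dualCoannihilator_dualAnnihilator_eq,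
        hfΦ]

theorem LinearMap.finrank_ker_dualMap [FiniteDimensional K V] (f : End K V) :
    finrank K (ker f.dualMap) = finrank K (ker f) := by
  have := finrank_range_add_finrank_ker f
  have := finrank_range_add_finrank_ker f.dualMap
  have := finrank_range_dualMap_eq_finrank_range f
  have := Subspace.dual_finrank_eq (K := K) (V := V)
  omega

end DualInvariant

section Binary

variable {V : Type*} [AddCommGroup V] [Module (ZMod 2) V]

theorem span_singleton_injective_zmod_two :
    Function.Injective (fun v : V => (ZMod 2) ∙ v) := by
  intro v w h
  obtain ⟨u, hu⟩ := span_singleton_eq_span_singleton.mp h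
  rwa [Subsingleton.elim u 1, one_smul] at hu

theorem span_singleton_map_eq_self_iff (f : End (ZMod 2) V) (v : V) :
    ((ZMod 2) ∙ v).map f = (ZMod 2) ∙ v ↔ f v = v := by
  rw [Submodule.map_span, Set.image_singleton]
  exact span_singleton_injective_zmod_two.eq_iff

theorem setOf_invariant_lines_eq_image (f : End (ZMod 2) V) :
    {L : Submodule (ZMod 2) V | finrank (ZMod 2) L = 1 ∧ L.map f = L} =
      (fun v : V => (ZMod 2) ∙ v) '' ((ker (f - 1) : Set V) \ {0}) := by
  ext L
  simp only [Set.mem_ofPred_eq, Set.mem_image, Set.mem_sdiff, SetLike.mem_coe, mem_ker,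
    LinearMap.sub_apply, End.one_apply, sub_eq_zero, Set.mem_singleton_iff]
  constructor
  · rintro ⟨hL, hfL⟩
    obtain ⟨v, hv, hv0⟩ := (Submodule.ne_bot_iff L).mp (by rintro rfl; simp at hL)
    obtain rfl := eq_span_singleton_of_mem_of_finrank_eq_one hL hv hv0
    exact ⟨v, ⟨(span_singleton_map_eq_self_iff f v).mp hfL, hv0⟩, rfl⟩
  · rintro ⟨v, ⟨hfv, hv0⟩, rfl⟩
    exact ⟨finrank_span_singleton hv0, (span_singleton_map_eq_self_iff f v).mpr hfv⟩

theorem ncard_invariant_lines_add_one [Module.Finite (ZMod 2) V] (f : End (ZMod 2) V) :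
    {L : Submodule (ZMod 2) V | finrank (ZMod 2) L = 1 ∧ L.map f = L}.ncard + 1 =
      2 ^ finrank (ZMod 2) (ker (f - 1)) := by
  have : Finite V := Module.finite_of_finite (ZMod 2)
  rw [setOf_invariant_lines_eq_image,
    Set.ncard_image_of_injective _ span_singleton_injective_zmod_two,
    Set.ncard_sdiff_singleton_add_one (zero_mem _), ← Nat.card_coe_set_eq, SetLike.coe_sort_coe,
    natCard_eq_pow_finrank (K := ZMod 2), Nat.card_zmod]

end Binary

/-- For every `g ∈ GL₅(𝔽₂)`, the number of 1-dimensional subspaces of `𝔽₂⁵`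
fixed (setwise) by `g` equals the number of 4-dimensional subspaces of `𝔽₂⁵` fixed (setwise)
by `g`; i.e. the two degree-31 actions of `PSL₅(𝔽₂) ≅ GL₅(𝔽₂)` on the points and on the
hyperplanes of `PG(4, 2)` are arithmetically equivalent. -/
theorem card_fixed_lines_eq_card_fixed_hyperplanes
    (g : Matrix.GeneralLinearGroup (Fin 5) (ZMod 2)) :
    {L : Submodule (ZMod 2) (Fin 5 → ZMod 2) | Module.finrank (ZMod 2) ↥L = 1 ∧
      L.map (Matrix.mulVecLin (g : Matrix (Fin 5) (Fin 5) (ZMod 2))) = L}.ncard =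
    {W : Submodule (ZMod 2) (Fin 5 → ZMod 2) | Module.finrank (ZMod 2) ↥W = 4 ∧
      W.map (Matrix.mulVecLin (g : Matrix (Fin 5) (Fin 5) (ZMod 2))) = W}.ncard := by
  set f := Matrix.mulVecLin (g : Matrix (Fin 5) (Fin 5) (ZMod 2))
  have hf : Function.Injective f := Matrix.mulVec_injective_iff_isUnit.mpr g.isUnit
  have hyperplanes :
      {W : Submodule (ZMod 2) (Fin 5 → ZMod 2) | finrank (ZMod 2) W = 4 ∧ W.map f = W} =
        {W : Submodule (ZMod 2) (Fin 5 → ZMod 2) |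
          finrank (ZMod 2) W + 1 = finrank (ZMod 2) (Fin 5 → ZMod 2) ∧ W.map f = W} := by
    simp
  rw [hyperplanes, Subspace.ncard_invariant_codim_eq_ncard_invariant_dual hf, ← add_left_inj 1,
    ncard_invariant_lines_add_one, ncard_invariant_lines_add_one, ← dualMap_sub_one,
    finrank_ker_dualMap]
end
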